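/- Under the same assumptions (W continuous, vanishing exactly on E, I converging on B_δ(E) with lim_{d(x,E)→0} I(x) = 0, φ a continuous flow), the function I(x) = ∫₀^∞ W(φ(s,x)) ds is continuous at every point x of the domain of attraction D. -/

import Mathlib

/-!
Split the orbit integral at a time `T ≥ 0`: by the semiflow property,
`I(y) = ∫₀ᵀ W(φ(s,y)) ds + I(φ(T,y))`. The first term is continuous in `y` (parametric integral of
a jointly continuous function over a compact interval). Since the orbit of `x` approaches `E`,
for large `T` the point `φ(T,x)`, and hence `φ(T,y)` for `y` near `x`, lies in the region where
`I` is small; so `I` is a local uniform limit of continuous functions at `x`.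
-/

open MeasureTheory Metric Set Filter

section Shift

variable {E : Type*} [NormedAddCommGroup E]

theorem integrableOn_Ici_comp_add_right_iff (f : ℝ → E) (T : ℝ) :
    IntegrableOn (fun u => f (u + T)) (Ici 0) ↔ IntegrableOn f (Ici T) := by
  have h := (measurePreserving_add_right volume T).integrableOn_comp_preimage
    (Homeomorph.addRight T).isClosedEmbedding.measurableEmbedding (f := f) (s := Ici T)
  rwa [preimage_add_const_Ici, sub_self] at h

variable [NormedSpace ℝ E]

theorem integral_Ici_comp_add_right (f : ℝ → E) (T : ℝ) :
    ∫ u in Ici 0, f (u + T) = ∫ s in Ici T, f s := by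
  have h := (measurePreserving_add_right volume T).setIntegral_preimage_emb
    (Homeomorph.addRight T).isClosedEmbedding.measurableEmbedding f (Ici T)
  rwa [preimage_add_const_Ici, sub_self] at h

theorem intervalIntegral_add_integral_Ici {f : ℝ → E} {a b : ℝ}
    (ha : IntervalIntegrable f volume a b) (hb : IntegrableOn f (Ici b)) :
    (∫ s in a..b, f s) + ∫ s in Ici b, f s = ∫ s in Ici a, f s := by
  rw [integral_Ici_eq_integral_Ioi, integral_Ici_eq_integral_Ioi]
  exact intervalIntegral.integral_interval_add_Ioi' ha (hb.mono_set Ioi_subset_Ici_self)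

end Shift

section OrbitIntegral

variable {X : Type*} (φ : ℝ → X → X) (g : X → ℝ)

noncomputable def orbitIntegral (y : X) : ℝ :=
  ∫ s in Ici (0 : ℝ), g (φ s y)

variable {φ g}

theorem orbitIntegral_nonneg (hg0 : ∀ z, 0 ≤ g z) (y : X) : 0 ≤ orbitIntegral φ g y :=
  setIntegral_nonneg measurableSet_Ici fun _ _ => hg0 _

theorem orbitIntegral_eq_intervalIntegral_add
    (hsemi : ∀ t s : ℝ, 0 ≤ t → 0 ≤ s → ∀ x, φ (t + s) x = φ t (φ s x))
    {T : ℝ} (hT : 0 ≤ T) {y : X} (hfront : IntervalIntegrable (fun s => g (φ s y)) volume 0 T)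
    (htail : IntegrableOn (fun s => g (φ s (φ T y))) (Ici 0)) :
    orbitIntegral φ g y = (∫ s in 0..T, g (φ s y)) + orbitIntegral φ g (φ T y) := by
  have hshift : EqOn (fun u => g (φ u (φ T y))) (fun u => g (φ (u + T) y)) (Ici 0) :=
    fun u hu => congrArg g (hsemi u T hu hT y).symm
  have htail' : IntegrableOn (fun s => g (φ s y)) (Ici T) :=
    (integrableOn_Ici_comp_add_right_iff _ T).1 (htail.congr_fun hshift measurableSet_Ici)
  rw [orbitIntegral, orbitIntegral, setIntegral_congr_fun measurableSet_Ici hshift,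
    integral_Ici_comp_add_right (fun s => g (φ s y)),
    intervalIntegral_add_integral_Ici hfront htail']

theorem continuousAt_orbitIntegral [TopologicalSpace X] [LocallyCompactSpace X]
    (hsemi : ∀ t s : ℝ, 0 ≤ t → 0 ≤ s → ∀ x, φ (t + s) x = φ t (φ s x))
    (hφ : Continuous fun p : ℝ × X => φ p.1 p.2) (hg : Continuous g) (hg0 : ∀ z, 0 ≤ g z)
    {x : X} (hsmall : ∀ ε > 0, ∃ V : Set X, IsOpen V ∧ (∃ T ≥ 0, φ T x ∈ V) ∧
      ∀ z ∈ V, IntegrableOn (fun s => g (φ s z)) (Ici 0) ∧ orbitIntegral φ g z < ε) :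
    ContinuousAt (orbitIntegral φ g) x := by
  have hgφ : Continuous fun p : ℝ × X => g (φ p.1 p.2) := hg.comp hφ
  refine continuousAt_of_locally_uniform_approx_of_continuousAt fun u hu => ?_
  obtain ⟨ε, hε, hεu⟩ := mem_uniformity_dist.1 hu
  obtain ⟨V, hVopen, ⟨T, hT, hTx⟩, hV⟩ := hsmall ε hε
  have hφT : Continuous (φ T) := hφ.comp (continuous_const.prodMk continuous_id)
  refine ⟨φ T ⁻¹' V, (hVopen.preimage hφT).mem_nhds hTx, fun y => ∫ s in 0..T, g (φ s y),
    (intervalIntegral.continuous_parametric_intervalIntegral_of_continuous'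
      (f := fun y s => g (φ s y)) (hgφ.comp continuous_swap) 0 T).continuousAt, fun y hy => hεu ?_⟩
  obtain ⟨htail, hlt⟩ := hV _ hy
  have hfront : IntervalIntegrable (fun s => g (φ s y)) volume 0 T :=
    (hgφ.comp (continuous_id.prodMk continuous_const)).intervalIntegrable 0 T
  rwa [orbitIntegral_eq_intervalIntegral_add hsemi hT hfront htail, Real.dist_eq,
    add_sub_cancel_left, abs_of_nonneg (orbitIntegral_nonneg hg0 _)]

end OrbitIntegral

theorem zubov_integral_continuous_on_DOA_general
    (n : ℕ) (φ : ℝ → EuclideanSpace ℝ (Fin n) → EuclideanSpace ℝ (Fin n))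
    (hφsemi : ∀ t s : ℝ, 0 ≤ t → 0 ≤ s → ∀ x, φ (t + s) x = φ t (φ s x))
    (hφcont : Continuous fun p : ℝ × EuclideanSpace ℝ (Fin n) => φ p.1 p.2)
    (E : Set (EuclideanSpace ℝ (Fin n)))
    (W : EuclideanSpace ℝ (Fin n) → ℝ) (hWcont : Continuous W)
    (hW0 : ∀ x ∈ E, W x = 0) (hWpos : ∀ x ∉ E, 0 < W x)
    (δ : ℝ) (hδ : 0 < δ)
    (hconv : ∀ y, infDist y E < δ → IntegrableOn (fun s => W (φ s y)) (Set.Ici (0 : ℝ)))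
    (hIlim : ∀ ε > 0, ∃ η > 0, ∀ y, infDist y E < η → infDist y E < δ →
      ∫ s in Set.Ici (0 : ℝ), W (φ s y) < ε)
    (x : EuclideanSpace ℝ (Fin n))
    (hx : Tendsto (fun t => infDist (φ t x) E) atTop (nhds 0)) :
    ContinuousAt (fun y => ∫ s in Set.Ici (0 : ℝ), W (φ s y)) x := by
  have hWnonneg : ∀ z, 0 ≤ W z := fun z => by
    by_cases hz : z ∈ E
    · exact (hW0 z hz).ge
    · exact (hWpos z hz).le
  refine continuousAt_orbitIntegral hφsemi hφcont hWcont hWnonneg fun ε hε => ?_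
  obtain ⟨η, hη, hIη⟩ := hIlim ε hε
  obtain ⟨T, hTx, hT⟩ :=
    ((hx.eventually_lt_const (lt_min hη hδ)).and (eventually_ge_atTop 0)).exists
  refine ⟨{z | infDist z E < min η δ}, isOpen_lt (continuous_infDist_pt E) continuous_const,
    ⟨T, hT, hTx⟩, fun z hz => ?_⟩
  have hzη : infDist z E < η := hz.trans_le (min_le_left _ _)
  have hzδ : infDist z E < δ := hz.trans_le (min_le_right _ _)
  exact ⟨hconv z hzδ, hIη z hzη hzδ⟩

/-- `I(x) = ∫₀^∞ W(φ(s,x)) ds` is continuous at every point of the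
domain of attraction `D`. -/
theorem zubov_integral_continuous_on_DOA
    (n : ℕ) (φ : ℝ → EuclideanSpace ℝ (Fin n) → EuclideanSpace ℝ (Fin n))
    (hφ0 : ∀ x, φ 0 x = x)
    (hφsemi : ∀ t s : ℝ, 0 ≤ t → 0 ≤ s → ∀ x, φ (t + s) x = φ t (φ s x))
    (hφcont : Continuous fun p : ℝ × EuclideanSpace ℝ (Fin n) => φ p.1 p.2)
    (E : Set (EuclideanSpace ℝ (Fin n))) (hE : IsClosed E)
    (hEinv : ∀ x ∈ E, ∀ t : ℝ, 0 ≤ t → φ t x ∈ E)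
    (W : EuclideanSpace ℝ (Fin n) → ℝ) (hWcont : Continuous W)
    (hW0 : ∀ x ∈ E, W x = 0) (hWpos : ∀ x ∉ E, 0 < W x)
    (δ : ℝ) (hδ : 0 < δ)
    (hconv : ∀ y, infDist y E < δ → IntegrableOn (fun s => W (φ s y)) (Set.Ici (0 : ℝ)))
    (hIlim : ∀ ε > 0, ∃ η > 0, ∀ y, infDist y E < η → infDist y E < δ →
      ∫ s in Set.Ici (0 : ℝ), W (φ s y) < ε)
    (x : EuclideanSpace ℝ (Fin n))
    (hx : Tendsto (fun t => infDist (φ t x) E) atTop (nhds 0)) :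
    ContinuousAt (fun y => ∫ s in Set.Ici (0 : ℝ), W (φ s y)) x :=
  zubov_integral_continuous_on_DOA_general n φ hφsemi hφcont E W hWcont hW0 hWpos δ hδ hconv hIlim x
    hx
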